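/- Let K be a field of characteristic ≠ 2 and c, d ∈ K nonzero. The generalized quaternion algebra D = (c,d) with basis {1, i, j, k}, relations i² = −c, j² = −d, ij = −ji = k, is a division ring if and only if the quadratic form Q(x₀,x₁,x₂,x₃) = x₀² + c x₁² + d x₂² + cd x₃² has only the trivial zero over K. -/

import Mathlib

open Quaternion

namespace QuaternionAlgebra

variable {R : Type*} [CommRing R]

/-- `a * star a = star a * a` is the scalar `(a * star a).re`, so an inverse of that scalar
times `star a` inverts `a`. -/
theorem isUnit_iff_isUnit_re_mul_star {c₁ c₂ c₃ : R} {a : ℍ[R,c₁,c₂,c₃]} :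
    IsUnit a ↔ IsUnit (a * star a).re := by
  constructor
  · intro ha
    obtain ⟨b, hb⟩ := (ha.mul ha.star).exists_right_inv
    rw [mul_star_eq_coe, coe_mul_eq_smul] at hb
    exact IsUnit.of_mul_eq_one b.re (by simpa using congrArg re hb)
  · rintro ⟨u, hu⟩
    refine isUnit_iff_exists.2 ⟨(↑u⁻¹ : R) • star a, ?_, ?_⟩
    · rw [mul_smul_comm, mul_star_eq_coe, ← hu, smul_coe, Units.inv_mul, coe_one]
    · rw [smul_mul_assoc, star_comm_self', mul_star_eq_coe, ← hu, smul_coe, Units.inv_mul,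
        coe_one]

theorem re_mul_star_neg_neg {c d : R} (a : ℍ[R,-c,-d]) :
    (a * star a).re = a.re ^ 2 + c * a.imI ^ 2 + d * a.imJ ^ 2 + c * d * a.imK ^ 2 := by
  simp only [re_mul, re_star, imI_star, imJ_star, imK_star]
  ring

end QuaternionAlgebra

theorem stmt8_general (K : Type*) [Field K] (c d : K) :
    (∀ a : ℍ[K, -c, -d], a ≠ 0 → IsUnit a) ↔
      (∀ x₀ x₁ x₂ x₃ : K,
        x₀ ^ 2 + c * x₁ ^ 2 + d * x₂ ^ 2 + c * d * x₃ ^ 2 = 0 →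
        x₀ = 0 ∧ x₁ = 0 ∧ x₂ = 0 ∧ x₃ = 0) := by
  simp only [QuaternionAlgebra.isUnit_iff_isUnit_re_mul_star, isUnit_iff_ne_zero,
    QuaternionAlgebra.re_mul_star_neg_neg]
  constructor
  · intro h x₀ x₁ x₂ x₃ hQ
    by_contra hx
    exact h ⟨x₀, x₁, x₂, x₃⟩ (by simpa [QuaternionAlgebra.ext_iff] using hx) hQ
  · intro h a ha hQ
    exact ha (QuaternionAlgebra.ext_iff.2 (h _ _ _ _ hQ))

/-- over a field `K` of characteristic ≠ 2 with `c, d ≠ 0`, the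
generalized quaternion algebra `(c,d)` (with `i² = −c`, `j² = −d`, `ij = −ji`)
is a division ring iff the quadratic form
`x₀² + c x₁² + d x₂² + cd x₃²` has only the trivial zero over `K`. -/
theorem stmt8 (K : Type*) [Field K] (h2 : (2 : K) ≠ 0) (c d : K)
    (hc : c ≠ 0) (hd : d ≠ 0) :
    (∀ a : ℍ[K, -c, -d], a ≠ 0 → IsUnit a) ↔
      (∀ x₀ x₁ x₂ x₃ : K,
        x₀ ^ 2 + c * x₁ ^ 2 + d * x₂ ^ 2 + c * d * x₃ ^ 2 = 0 →
        x₀ = 0 ∧ x₁ = 0 ∧ x₂ = 0 ∧ x₃ = 0) :=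
  stmt8_general K c d
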